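/- arXiv:1010.3688 — 2 statements merged into one kernel-verified Lean document; each statement's English description precedes it below -/
import Mathlib

section
/- Let {A_k : ℝ^m → ℝ^m, k ∈ ℤ} be a sequence of linear isomorphisms for which there is a constant N > 0 with ‖A_k‖ ≤ N and ‖A_k⁻¹‖ ≤ N for all k. Assume that for every bounded sequence {w_k ∈ ℝ^m, k ∈ ℤ} there exists a bounded sequence {v_k ∈ ℝ^m, k ∈ ℤ} such that v_{k+1} = A_k v_k + w_k for all k ∈ ℤ. Then the sequence {A_k} is hyperbolic on the ray [0, +∞). -/
/-!
Perron's method on the half-line. By the open mapping theorem, `v_{k+1} = A_k v_k + w_k` has a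
solution with `‖v‖_∞ ≤ L ‖w‖_∞`, and by Banach–Steinhaus the trajectories starting in the space `S`
of initial values with bounded forward orbit satisfy `‖Φ(k,0)ξ‖ ≤ K ‖ξ‖`. Hence every eventually
bounded solution of the forced equation stays within `L ‖w‖_∞` of a trajectory starting in `S`.
Testing this on `u_k = c_k Φ(k,0)ξ`, where `c_k` are partial sums of `‖Φ(t,0)ξ‖⁻¹`, gives
`(∑_t ‖Φ(t,0)ξ‖⁻¹) ‖Φ(j,0)ξ‖ ≤ C`, and such a bound forces geometric decay on `S`, and in the
mirrored form geometric growth on `Sᗮ`. The dichotomy projections are the orthogonal projection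
onto `S` transported by `Φ`; an impulse at a single time shows that they are uniformly bounded.
-/

open Filter Topology

/-- Transition map `Φ(k,l)` for `k = l + n`, `n ≥ 0`:
`Φ(l+n+1, l) = A_{l+n} ∘ Φ(l+n, l)`. -/
noncomputable def PhiPos {m : ℕ}
    (A : ℤ → (EuclideanSpace ℝ (Fin m) ≃L[ℝ] EuclideanSpace ℝ (Fin m))) (l : ℤ) :
    ℕ → (EuclideanSpace ℝ (Fin m) →L[ℝ] EuclideanSpace ℝ (Fin m))
  | 0 => 1
  | n + 1 =>
      ((A (l + n) : EuclideanSpace ℝ (Fin m) →L[ℝ] EuclideanSpace ℝ (Fin m))).comp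
        (PhiPos A l n)

/-- Transition map `Φ(k,l)` for `l = k + n`, `n ≥ 0`:
`Φ(k, k+n+1) = Φ(k, k+n) ∘ A_{k+n}⁻¹`. -/
noncomputable def PhiNeg {m : ℕ}
    (A : ℤ → (EuclideanSpace ℝ (Fin m) ≃L[ℝ] EuclideanSpace ℝ (Fin m))) (k : ℤ) :
    ℕ → (EuclideanSpace ℝ (Fin m) →L[ℝ] EuclideanSpace ℝ (Fin m))
  | 0 => 1
  | n + 1 =>
      (PhiNeg A k n).comp
        (((A (k + n)).symm : EuclideanSpace ℝ (Fin m) →L[ℝ] EuclideanSpace ℝ (Fin m)))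

/-- The transition maps `Φ(k,l)`: `Φ(k,l) = A_{k-1} ∘ ⋯ ∘ A_l` for `l < k`,
`Φ(k,k) = Id`, and `Φ(k,l) = A_k⁻¹ ∘ ⋯ ∘ A_{l-1}⁻¹` for `l > k`. -/
noncomputable def Phi {m : ℕ}
    (A : ℤ → (EuclideanSpace ℝ (Fin m) ≃L[ℝ] EuclideanSpace ℝ (Fin m))) (k l : ℤ) :
    EuclideanSpace ℝ (Fin m) →L[ℝ] EuclideanSpace ℝ (Fin m) :=
  if l ≤ k then PhiPos A l (k - l).toNat else PhiNeg A k (l - k).toNat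

/-- `B⁺(𝒜) = {v : ‖Φ(k,0)v‖ → 0 as k → +∞}`. -/
def Bplus {m : ℕ}
    (A : ℤ → (EuclideanSpace ℝ (Fin m) ≃L[ℝ] EuclideanSpace ℝ (Fin m))) :
    Set (EuclideanSpace ℝ (Fin m)) :=
  {v | Tendsto (fun k : ℤ => ‖Phi A k 0 v‖) atTop (𝓝 0)}

/-- `B⁻(𝒜) = {v : ‖Φ(k,0)v‖ → 0 as k → -∞}`. -/
def Bminus {m : ℕ}
    (A : ℤ → (EuclideanSpace ℝ (Fin m) ≃L[ℝ] EuclideanSpace ℝ (Fin m))) :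
    Set (EuclideanSpace ℝ (Fin m)) :=
  {v | Tendsto (fun k : ℤ => ‖Phi A k 0 v‖) atBot (𝓝 0)}

/-- The sequence `𝒜` is hyperbolic on the ray `[0, +∞)`. -/
def HyperbolicOnPlusRay {m : ℕ}
    (A : ℤ → (EuclideanSpace ℝ (Fin m) ≃L[ℝ] EuclideanSpace ℝ (Fin m))) : Prop :=
  ∃ (C lam : ℝ)
    (P : ℤ → (EuclideanSpace ℝ (Fin m) →L[ℝ] EuclideanSpace ℝ (Fin m))),
    0 < C ∧ lam ∈ Set.Ioo (0 : ℝ) 1 ∧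
    (∀ k : ℤ, 0 ≤ k → (P k).comp (P k) = P k) ∧
    (∀ k l : ℤ, 0 ≤ k → 0 ≤ l → (P k).comp (Phi A k l) = (Phi A k l).comp (P l)) ∧
    (∀ k l : ℤ, 0 ≤ l → l ≤ k → ∀ v : EuclideanSpace ℝ (Fin m),
      ‖Phi A k l (P l v)‖ ≤ C * lam ^ (k - l).toNat * ‖v‖) ∧
    (∀ k l : ℤ, 0 ≤ k → k ≤ l → ∀ v : EuclideanSpace ℝ (Fin m),
      ‖Phi A k l ((1 - P l) v)‖ ≤ C * lam ^ (l - k).toNat * ‖v‖)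

/-- The sequence `𝒜` is hyperbolic on the ray `(-∞, 0]`. -/
def HyperbolicOnMinusRay {m : ℕ}
    (A : ℤ → (EuclideanSpace ℝ (Fin m) ≃L[ℝ] EuclideanSpace ℝ (Fin m))) : Prop :=
  ∃ (C lam : ℝ)
    (Q : ℤ → (EuclideanSpace ℝ (Fin m) →L[ℝ] EuclideanSpace ℝ (Fin m))),
    0 < C ∧ lam ∈ Set.Ioo (0 : ℝ) 1 ∧
    (∀ k : ℤ, k ≤ 0 → (Q k).comp (Q k) = Q k) ∧
    (∀ k l : ℤ, k ≤ 0 → l ≤ 0 → (Q k).comp (Phi A k l) = (Phi A k l).comp (Q l)) ∧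
    (∀ k l : ℤ, l ≤ k → k ≤ 0 → ∀ v : EuclideanSpace ℝ (Fin m),
      ‖Phi A k l (Q l v)‖ ≤ C * lam ^ (k - l).toNat * ‖v‖) ∧
    (∀ k l : ℤ, k ≤ l → l ≤ 0 → ∀ v : EuclideanSpace ℝ (Fin m),
      ‖Phi A k l ((1 - Q l) v)‖ ≤ C * lam ^ (l - k).toNat * ‖v‖)

open scoped ENNReal

section BoundedSolutions

variable {E : Type*} [NormedAddCommGroup E] [NormedSpace ℝ E]

def SolvableWithBound (T : ℕ → E →L[ℝ] E) (L : ℝ) : Prop :=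
  ∀ (w : ℕ → E) (c : ℝ), (∀ k, ‖w k‖ ≤ c) →
    ∃ v : ℕ → E, (∀ k, ‖v k‖ ≤ L * c) ∧ ∀ k, v (k + 1) = T k (v k) + w k

theorem norm_apply_succ_sub_le {T : ℕ → E →L[ℝ] E} {N : ℝ} (hT : ∀ k, ‖T k‖ ≤ N)
    (v : lp (fun _ : ℕ => E) ∞) (k : ℕ) : ‖v (k + 1) - T k (v k)‖ ≤ (1 + N) * ‖v‖ := by
  have hv (i : ℕ) : ‖v i‖ ≤ ‖v‖ := lp.norm_apply_le_norm ENNReal.top_ne_zero v i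
  calc ‖v (k + 1) - T k (v k)‖ ≤ ‖v (k + 1)‖ + ‖T k‖ * ‖v k‖ :=
        (norm_sub_le _ _).trans (add_le_add_right ((T k).le_opNorm _) _)
    _ ≤ ‖v‖ + N * ‖v‖ := by gcongr; exacts [hv _, (norm_nonneg _).trans (hT k), hT k, hv k]
    _ = (1 + N) * ‖v‖ := by ring

noncomputable def differenceOperator (T : ℕ → E →L[ℝ] E) {N : ℝ} (hT : ∀ k, ‖T k‖ ≤ N) :
    lp (fun _ : ℕ => E) ∞ →L[ℝ] lp (fun _ : ℕ => E) ∞ :=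
  LinearMap.mkContinuous
    { toFun := fun v => ⟨fun k => v (k + 1) - T k (v k), memℓp_infty
        ⟨(1 + N) * ‖v‖, by rintro _ ⟨k, rfl⟩; exact norm_apply_succ_sub_le hT v k⟩⟩
      map_add' := fun v w => by ext k; simp only [lp.coeFn_add]; simp; abel
      map_smul' := fun c v => by ext k; simp [smul_sub] }
    (1 + N) fun v => lp.norm_le_of_forall_le
      (mul_nonneg (by linarith [norm_nonneg (T 0), hT 0]) (norm_nonneg v))
      (norm_apply_succ_sub_le hT v)

theorem differenceOperator_apply (T : ℕ → E →L[ℝ] E) {N : ℝ} (hT : ∀ k, ‖T k‖ ≤ N)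
    (v : lp (fun _ : ℕ => E) ∞) (k : ℕ) : differenceOperator T hT v k = v (k + 1) - T k (v k) :=
  rfl

theorem exists_solvableWithBound [CompleteSpace E] {T : ℕ → E →L[ℝ] E} {N : ℝ}
    (hT : ∀ k, ‖T k‖ ≤ N)
    (hsolv : ∀ w : ℕ → E, (∃ c, ∀ k, ‖w k‖ ≤ c) →
      ∃ v : ℕ → E, (∃ c, ∀ k, ‖v k‖ ≤ c) ∧ ∀ k, v (k + 1) = T k (v k) + w k) :
    ∃ L, 1 ≤ L ∧ SolvableWithBound T L := by
  have hsurj : Function.Surjective (differenceOperator T hT) := by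
    intro w
    obtain ⟨v, ⟨c, hc⟩, hv⟩ := hsolv w ⟨‖w‖, lp.norm_apply_le_norm ENNReal.top_ne_zero w⟩
    refine ⟨⟨v, memℓp_infty ⟨c, by rintro _ ⟨k, rfl⟩; exact hc k⟩⟩, ?_⟩
    ext k
    rw [differenceOperator_apply]
    simp [hv]
  obtain ⟨C, hC0, hC⟩ := (differenceOperator T hT).exists_preimage_norm_le hsurj
  refine ⟨max C 1, le_max_right _ _, fun w c hw => ?_⟩
  have hc : 0 ≤ c := (norm_nonneg _).trans (hw 0)
  let w' : lp (fun _ : ℕ => E) ∞ := ⟨w, memℓp_infty ⟨c, by rintro _ ⟨k, rfl⟩; exact hw k⟩⟩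
  obtain ⟨v, hv, hnorm⟩ := hC w'
  refine ⟨v, fun k => ?_, fun k => ?_⟩
  · calc ‖v k‖ ≤ ‖v‖ := lp.norm_apply_le_norm ENNReal.top_ne_zero v k
      _ ≤ C * c :=
        hnorm.trans (mul_le_mul_of_nonneg_left (lp.norm_le_of_forall_le (f := w') hc hw) hC0.le)
      _ ≤ max C 1 * c := by gcongr; exact le_max_left _ _
  · have := congrArg (fun x : lp (fun _ : ℕ => E) ∞ => x k) hv
    simp only [differenceOperator_apply] at this
    exact sub_eq_iff_eq_add'.1 this

end BoundedSolutions

theorem le_mul_pow_of_sum_Ico_inv_mul_le {a : ℕ → ℝ} {C : ℝ} (ha : ∀ t, 0 < a t)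
    (h : ∀ n j, n < j → (∑ t ∈ Finset.Ico n j, (a t)⁻¹) * a j ≤ C) {n j : ℕ} (hnj : n ≤ j) :
    a j ≤ (C + 1) * (C / (C + 1)) ^ (j - n) * a n := by
  have hC : 0 < C := by
    have := h n (n + 1) n.lt_succ_self
    rw [Nat.Ico_succ_singleton, Finset.sum_singleton] at this
    exact (mul_pos (inv_pos.2 (ha n)) (ha _)).trans_le this
  set θ := C / (C + 1)
  have hθ0 : 0 < θ := div_pos hC (by linarith)
  have hθ : θ * (1 + C⁻¹) = 1 := by simp only [θ]; field_simp
  have key (p : ℕ) : 1 ≤ θ ^ p * ((∑ t ∈ Finset.Ico n (n + 1 + p), (a t)⁻¹) * a n) := by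
    induction p with
    | zero => simp [(ha n).ne']
    | succ p ih =>
      set s := ∑ t ∈ Finset.Ico n (n + 1 + p), (a t)⁻¹
      have hstep : s / C ≤ (a (n + 1 + p))⁻¹ := by
        rw [div_le_iff₀ hC, inv_mul_eq_div, le_div_iff₀ (ha _)]
        exact h n _ (by omega)
      rw [← add_assoc, Finset.sum_Ico_succ_top (by omega)]
      calc 1 ≤ θ ^ p * (s * a n) := ih
        _ = θ ^ (p + 1) * ((s + s / C) * a n) := by
          rw [← mul_one (θ ^ p * _), ← hθ]; ring
        _ ≤ _ := by gcongr; exact (ha n).le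
  rcases hnj.eq_or_lt with rfl | hlt
  · simp only [Nat.sub_self, pow_zero, mul_one]
    nlinarith [ha n]
  obtain ⟨p, rfl⟩ : ∃ p, j = n + 1 + p := ⟨j - n - 1, by omega⟩
  rw [show n + 1 + p - n = p + 1 by omega]
  calc a (n + 1 + p)
        ≤ a (n + 1 + p) * (θ ^ p * ((∑ t ∈ Finset.Ico n (n + 1 + p), (a t)⁻¹) * a n)) :=
        le_mul_of_one_le_right (ha _).le (key p)
    _ = θ ^ p * a n * ((∑ t ∈ Finset.Ico n (n + 1 + p), (a t)⁻¹) * a (n + 1 + p)) := by ring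
    _ ≤ θ ^ p * a n * C := by
        gcongr; exacts [mul_nonneg (pow_nonneg hθ0.le p) (ha n).le, h n _ (by omega)]
    _ = (C + 1) * θ ^ (p + 1) * a n := by simp only [θ]; rw [pow_succ]; field_simp

theorem le_mul_pow_of_sum_Ioc_inv_mul_le {b : ℕ → ℝ} {C : ℝ} (hb : ∀ t, 0 < b t)
    (h : ∀ r j, r < j → (∑ t ∈ Finset.Ioc r j, (b t)⁻¹) * b r ≤ C) {r j : ℕ} (hrj : r ≤ j) :
    b r ≤ (C + 1) * (C / (C + 1)) ^ (j - r) * b j := by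
  have hC : 0 < C := by
    have := h r (r + 1) r.lt_succ_self
    rw [Nat.Ioc_succ_singleton, Finset.sum_singleton] at this
    exact (mul_pos (inv_pos.2 (hb _)) (hb r)).trans_le this
  set θ := C / (C + 1)
  have hθ0 : 0 < θ := div_pos hC (by linarith)
  have hθ : θ * (1 + C⁻¹) = 1 := by simp only [θ]; field_simp
  have key (p r : ℕ) :
      1 ≤ θ ^ p * ((∑ t ∈ Finset.Ioc r (r + 1 + p), (b t)⁻¹) * b (r + 1 + p)) := by
    induction p generalizing r with
    | zero => simp [(hb _).ne']
    | succ p ih =>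
      set s := ∑ t ∈ Finset.Ioc (r + 1) (r + 1 + 1 + p), (b t)⁻¹
      have hstep : s / C ≤ (b (r + 1))⁻¹ := by
        rw [div_le_iff₀ hC, inv_mul_eq_div, le_div_iff₀ (hb _)]
        exact h _ _ (by omega)
      rw [← Finset.sum_Ioc_consecutive _ r.le_succ (by omega), Nat.Ioc_succ_singleton,
        Finset.sum_singleton, show r + 1 + (p + 1) = r + 1 + 1 + p by omega]
      calc 1 ≤ θ ^ p * (s * b (r + 1 + 1 + p)) := ih (r + 1)
        _ = θ ^ (p + 1) * ((s / C + s) * b (r + 1 + 1 + p)) := by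
          rw [← mul_one (θ ^ p * _), ← hθ]; ring
        _ ≤ _ := by gcongr; exact (hb _).le
  rcases hrj.eq_or_lt with rfl | hlt
  · simp only [Nat.sub_self, pow_zero, mul_one]
    nlinarith [hb r]
  obtain ⟨p, rfl⟩ : ∃ p, j = r + 1 + p := ⟨j - r - 1, by omega⟩
  rw [show r + 1 + p - r = p + 1 by omega]
  calc b r ≤ b r * (θ ^ p * ((∑ t ∈ Finset.Ioc r (r + 1 + p), (b t)⁻¹) * b (r + 1 + p))) :=
        le_mul_of_one_le_right (hb _).le (key p r)
    _ = θ ^ p * b (r + 1 + p) * ((∑ t ∈ Finset.Ioc r (r + 1 + p), (b t)⁻¹) * b r) := by ring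
    _ ≤ θ ^ p * b (r + 1 + p) * C := by
        gcongr; exacts [mul_nonneg (pow_nonneg hθ0.le p) (hb _).le, h r _ (by omega)]
    _ = (C + 1) * θ ^ (p + 1) * b (r + 1 + p) := by simp only [θ]; rw [pow_succ]; field_simp

section Flow

variable {m : ℕ} (A : ℤ → (EuclideanSpace ℝ (Fin m) ≃L[ℝ] EuclideanSpace ℝ (Fin m)))

local notation "E" => EuclideanSpace ℝ (Fin m)

@[simp]
theorem Phi_self (k : ℤ) : Phi A k k = 1 := by
  simp [Phi, PhiPos]

theorem PhiNeg_succ (k : ℤ) (n : ℕ) :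
    PhiNeg A k (n + 1) = ((A k).symm : E →L[ℝ] E).comp (PhiNeg A (k + 1) n) := by
  induction n generalizing k with
  | zero => ext; simp [PhiNeg]
  | succ n ih =>
    rw [PhiNeg, ih, PhiNeg, ContinuousLinearMap.comp_assoc, Nat.cast_succ, add_comm (n : ℤ),
      add_assoc]

theorem Phi_succ_left (k l : ℤ) : Phi A (k + 1) l = (A k : E →L[ℝ] E).comp (Phi A k l) := by
  rcases lt_trichotomy l (k + 1) with h | rfl | h
  · have hl : (k + 1 - l).toNat = (k - l).toNat + 1 := by omega
    rw [Phi, Phi, if_pos h.le, if_pos (by omega), hl, PhiPos]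
    congr 3
    omega
  · ext v
    simp [Phi, PhiNeg, PhiPos]
  · have hl : (l - k).toNat = (l - (k + 1)).toNat + 1 := by omega
    rw [Phi, Phi, if_neg (by omega), if_neg (by omega), hl, PhiNeg_succ,
      ← ContinuousLinearMap.comp_assoc]
    ext v
    simp

theorem Phi_succ_apply (k l : ℤ) (v : E) : Phi A (k + 1) l v = A k (Phi A k l v) := by
  rw [Phi_succ_left]
  rfl

theorem Phi_pred_left (k l : ℤ) :
    Phi A (k - 1) l = ((A (k - 1)).symm : E →L[ℝ] E).comp (Phi A k l) := by
  conv_rhs => rw [← sub_add_cancel k 1, Phi_succ_left, ← ContinuousLinearMap.comp_assoc]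
  ext v
  simp

theorem Phi_comp (k l j : ℤ) : (Phi A k l).comp (Phi A l j) = Phi A k j := by
  induction k using Int.inductionOn' (b := l) with
  | zero => ext; simp
  | succ k _ ih => rw [Phi_succ_left, Phi_succ_left, ContinuousLinearMap.comp_assoc, ih]
  | pred k _ ih => rw [Phi_pred_left, Phi_pred_left, ContinuousLinearMap.comp_assoc, ih]

theorem Phi_apply_Phi (k l j : ℤ) (v : E) : Phi A k l (Phi A l j v) = Phi A k j v := by
  rw [← Phi_comp A k l j]
  rfl

theorem eq_Phi_of_forall_succ {y : ℕ → E} (hy : ∀ i : ℕ, y (i + 1) = A i (y i)) (i : ℕ) :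
    y i = Phi A i 0 (y 0) := by
  induction i with
  | zero => simp
  | succ i ih => rw [hy, ih, Nat.cast_succ, Phi_succ_apply]

def stableSubspace : Submodule ℝ E where
  carrier := {ξ | ∃ c, ∀ᶠ k : ℕ in atTop, ‖Phi A k 0 ξ‖ ≤ c}
  zero_mem' := ⟨0, by simp⟩
  add_mem' := by
    rintro ξ η ⟨a, ha⟩ ⟨b, hb⟩
    refine ⟨a + b, (ha.and hb).mono fun k hk => ?_⟩
    rw [map_add]
    exact (norm_add_le _ _).trans (add_le_add hk.1 hk.2)
  smul_mem' := by
    rintro r ξ ⟨a, ha⟩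
    refine ⟨‖r‖ * a, ha.mono fun k hk => ?_⟩
    rw [map_smul, norm_smul]
    exact mul_le_mul_of_nonneg_left hk (norm_nonneg r)

theorem exists_norm_Phi_le_of_mem_stableSubspace :
    ∃ K, 0 ≤ K ∧ ∀ ξ ∈ stableSubspace A, ∀ k : ℕ, ‖Phi A k 0 ξ‖ ≤ K * ‖ξ‖ := by
  let g (k : ℕ) : stableSubspace A →L[ℝ] E := (Phi A k 0).comp (stableSubspace A).subtypeL
  obtain ⟨K, hK⟩ := banach_steinhaus (g := g) fun ξ => by
    obtain ⟨c, hc⟩ := (IsBoundedUnder.bddAbove_range ξ.2 :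
      BddAbove (Set.range fun k : ℕ => ‖Phi A k 0 ξ‖))
    exact ⟨c, fun k => hc ⟨k, rfl⟩⟩
  refine ⟨max K 0, le_max_right _ _, fun ξ hξ k => ?_⟩
  calc ‖Phi A k 0 ξ‖ = ‖g k ⟨ξ, hξ⟩‖ := rfl
    _ ≤ ‖g k‖ * ‖ξ‖ := (g k).le_opNorm _
    _ ≤ max K 0 * ‖ξ‖ := by gcongr; exact (hK k).trans (le_max_left _ _)

theorem exists_mem_stableSubspace_forall_norm_sub_le {L : ℝ}
    (hL : SolvableWithBound (fun k : ℕ => (A k : E →L[ℝ] E)) L) {u w : ℕ → E} {W : ℝ}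
    (hu : ∀ i : ℕ, u (i + 1) = A i (u i) + w i) (hw : ∀ i, ‖w i‖ ≤ W)
    (hbdd : ∃ c, ∀ᶠ i in atTop, ‖u i‖ ≤ c) :
    ∃ s ∈ stableSubspace A, ∀ i, ‖u i - Phi A i 0 s‖ ≤ L * W := by
  obtain ⟨v, hvW, hv⟩ := hL w W hw
  have hd : ∀ i : ℕ, (u - v) (i + 1) = A i ((u - v) i) := fun i => by
    simp [hv, hu, map_sub]
  obtain ⟨c, hc⟩ := hbdd
  refine ⟨(u - v) 0, ⟨c + L * W, hc.mono fun i hi => ?_⟩, fun i => ?_⟩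
  · rw [← eq_Phi_of_forall_succ A hd]
    exact (norm_sub_le _ _).trans (add_le_add hi (hvW i))
  · rw [← eq_Phi_of_forall_succ A hd]
    simpa using hvW i

noncomputable def transportedProj (P : E →L[ℝ] E) (l : ℤ) : E →L[ℝ] E :=
  (Phi A l 0).comp (P.comp (Phi A 0 l))

theorem transportedProj_apply (P : E →L[ℝ] E) (l : ℤ) (v : E) :
    transportedProj A P l v = Phi A l 0 (P (Phi A 0 l v)) :=
  rfl

theorem transportedProj_apply_Phi (P : E →L[ℝ] E) (l : ℤ) (ξ : E) :
    transportedProj A P l (Phi A l 0 ξ) = Phi A l 0 (P ξ) := by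
  simp [transportedProj_apply, Phi_apply_Phi]

theorem Phi_apply_ne_zero {k l : ℤ} {v : E} (hv : v ≠ 0) : Phi A k l v ≠ 0 := fun h => hv <| by
  simpa [Phi_apply_Phi] using congrArg (Phi A l k) h

theorem norm_transportedProj_starProjection_le {L K : ℝ}
    (hL : SolvableWithBound (fun k : ℕ => (A k : E →L[ℝ] E)) L) (hL1 : 1 ≤ L)
    (hK : ∀ ξ ∈ stableSubspace A, ∀ k : ℕ, ‖Phi A k 0 ξ‖ ≤ K * ‖ξ‖) (hK0 : 0 ≤ K)
    (l : ℕ) (v : E) :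
    ‖transportedProj A (stableSubspace A).starProjection l v‖ ≤ (1 + K) * L * ‖v‖ := by
  set P := (stableSubspace A).starProjection
  have hP (x : E) : ‖P x‖ ≤ ‖x‖ := (stableSubspace A).norm_starProjection_apply_le x
  cases l with
  | zero =>
    simp only [Nat.cast_zero, transportedProj_apply, Phi_self]
    exact (hP v).trans (le_mul_of_one_le_left (norm_nonneg v) (by nlinarith))
  | succ n =>
    -- the solution forced by an impulse `v` at time `n` that vanishes from time `n + 1` on
    let u : ℕ → E := fun i => if i ≤ n then -Phi A i (n + 1 : ℕ) v else 0
    let w : ℕ → E := fun i => if i = n then v else 0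
    have hu (i : ℕ) : u (i + 1) = A i (u i) + w i := by
      rcases lt_trichotomy i n with h | rfl | h
      · simp [u, w, h.le, Nat.succ_le_of_lt h, h.ne, Nat.cast_succ, Phi_succ_apply]
      · simp [u, w, ← Phi_succ_apply]
      · simp [u, w, not_le.2 h, show ¬ i + 1 ≤ n by omega, h.ne']
    have hw (i : ℕ) : ‖w i‖ ≤ ‖v‖ := by
      simp only [w]
      split_ifs <;> simp
    have hbdd : ∃ c, ∀ᶠ i in atTop, ‖u i‖ ≤ c :=
      ⟨0, eventually_atTop.2 ⟨n + 1, fun i hi => by simp [u, show ¬ i ≤ n by omega]⟩⟩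
    obtain ⟨s, hs, hus⟩ := exists_mem_stableSubspace_forall_norm_sub_le A hL hu hw hbdd
    have h0 : ‖Phi A 0 (n + 1 : ℕ) v + s‖ ≤ L * ‖v‖ := by
      have := hus 0
      simp only [u, zero_le, if_true, Nat.cast_zero, Phi_self, one_apply_eq_self] at this
      rwa [← neg_add', norm_neg] at this
    have h1 : ‖Phi A (n + 1 : ℕ) 0 s‖ ≤ L * ‖v‖ := by simpa [u] using hus (n + 1)
    have hsplit : transportedProj A P (n + 1 : ℕ) v =
        Phi A (n + 1 : ℕ) 0 (P (Phi A 0 (n + 1 : ℕ) v + s)) - Phi A (n + 1 : ℕ) 0 s := by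
      rw [transportedProj_apply, map_add, Submodule.starProjection_eq_self_iff.2 hs, map_add,
        add_sub_cancel_right]
    rw [hsplit]
    calc _ ≤ K * ‖P (Phi A 0 (n + 1 : ℕ) v + s)‖ + L * ‖v‖ :=
          norm_sub_le_of_le (hK _ (Submodule.starProjection_apply_mem _ _) _) h1
      _ ≤ K * (L * ‖v‖) + L * ‖v‖ := by gcongr; exact (hP _).trans h0
      _ = (1 + K) * L * ‖v‖ := by ring

theorem sum_Ico_inv_norm_Phi_mul_le {N L K : ℝ} (hA : ∀ k, ‖(A k : E →L[ℝ] E)‖ ≤ N)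
    (hL : SolvableWithBound (fun k : ℕ => (A k : E →L[ℝ] E)) L)
    (hK : ∀ ξ ∈ stableSubspace A, ∀ k : ℕ, ‖Phi A k 0 ξ‖ ≤ K * ‖ξ‖) (hK0 : 0 ≤ K)
    {ξ : E} (hξ : ξ ∈ stableSubspace A) (n j : ℕ) :
    (∑ t ∈ Finset.Ico n j, ‖Phi A t 0 ξ‖⁻¹) * ‖Phi A j 0 ξ‖ ≤ (1 + K) * L * N := by
  set x : ℕ → E := fun t => Phi A t 0 ξ
  have hx (i : ℕ) : x (i + 1) = A i (x i) := by simp [x, Phi_succ_apply]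
  let e : ℕ → ℝ := fun t => if n ≤ t ∧ t < j then ‖x t‖⁻¹ else 0
  let c : ℕ → ℝ := fun i => ∑ t ∈ Finset.range i, e t
  have hc (i : ℕ) (hi : j ≤ i) : c i = c j :=
    Finset.eventually_constant_sum (fun t ht => if_neg (by omega)) hi
  have hcj : c j = ∑ t ∈ Finset.Ico n j, ‖x t‖⁻¹ := by
    simp only [c, e, ← Finset.sum_filter]
    congr 1
    ext t
    simp
  have hu (i : ℕ) : c (i + 1) • x (i + 1) = A i (c i • x i) + e i • x (i + 1) := by
    simp only [c, Finset.sum_range_succ, add_smul, map_smul, hx]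
  have hN : 0 ≤ N := (norm_nonneg _).trans (hA 0)
  have hw (i : ℕ) : ‖e i • x (i + 1)‖ ≤ N := by
    rw [norm_smul, hx]
    simp only [e]
    split_ifs
    · calc ‖‖x i‖⁻¹‖ * ‖A i (x i)‖ ≤ ‖x i‖⁻¹ * (N * ‖x i‖) := by
            rw [norm_inv, norm_norm]
            gcongr
            exact ((A i : E →L[ℝ] E).le_opNorm _).trans (by gcongr; exact hA i)
        _ ≤ N := by rw [mul_left_comm]; exact mul_le_of_le_one_right hN inv_mul_le_one
    · simpa using hN
  have hbdd : ∃ b, ∀ᶠ i in atTop, ‖c i • x i‖ ≤ b := by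
    obtain ⟨b, hb⟩ := hξ
    refine ⟨‖c j‖ * b, ((eventually_ge_atTop j).and hb).mono fun i hi => ?_⟩
    rw [norm_smul, hc i hi.1]
    exact mul_le_mul_of_nonneg_left hi.2 (norm_nonneg _)
  obtain ⟨s, hs, hus⟩ := exists_mem_stableSubspace_forall_norm_sub_le A hL hu hw hbdd
  have hs0 : ‖s‖ ≤ L * N := by simpa [c] using hus 0
  calc (∑ t ∈ Finset.Ico n j, ‖x t‖⁻¹) * ‖x j‖ = ‖c j • x j‖ := by
        rw [norm_smul, hcj, Real.norm_of_nonneg (Finset.sum_nonneg fun t _ => by positivity)]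
    _ ≤ ‖c j • x j - Phi A j 0 s‖ + ‖Phi A j 0 s‖ := norm_le_norm_sub_add _ _
    _ ≤ L * N + K * (L * N) := add_le_add (hus j) ((hK s hs j).trans (by gcongr))
    _ = (1 + K) * L * N := by ring

theorem sum_Ioc_inv_norm_Phi_mul_le {L M : ℝ}
    (hL : SolvableWithBound (fun k : ℕ => (A k : E →L[ℝ] E)) L)
    (hM : ∀ (l : ℕ) (v : E),
      ‖transportedProj A (stableSubspace A).starProjection l v‖ ≤ M * ‖v‖) (hM0 : 0 ≤ M)
    {η : E} (hη : (stableSubspace A).starProjection η = 0) (r j : ℕ) :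
    (∑ t ∈ Finset.Ioc r j, ‖Phi A t 0 η‖⁻¹) * ‖Phi A r 0 η‖ ≤ (1 + M) * L := by
  set P := (stableSubspace A).starProjection
  set x : ℕ → E := fun t => Phi A t 0 η
  have hx (i : ℕ) : x (i + 1) = A i (x i) := by simp [x, Phi_succ_apply]
  let f : ℕ → ℝ := fun t => if r < t then ‖x t‖⁻¹ else 0
  let c : ℕ → ℝ := fun i => ∑ t ∈ Finset.Ioc i j, f t
  have hcr : c r = ∑ t ∈ Finset.Ioc r j, ‖x t‖⁻¹ :=
    Finset.sum_congr rfl fun t ht => if_pos (Finset.mem_Ioc.1 ht).1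
  have hc (i : ℕ) : |c (i + 1) - c i| ≤ ‖x (i + 1)‖⁻¹ := by
    rcases lt_or_ge i j with h | h
    · have : c i = f (i + 1) + c (i + 1) := by
        simp only [c]
        rw [← Finset.sum_Ioc_consecutive _ i.le_succ h, Nat.Ioc_succ_singleton,
          Finset.sum_singleton]
      rw [this, sub_add_cancel_right, abs_neg]
      simp only [f]
      split_ifs <;> simp
    · simp [c, Finset.Ioc_eq_empty_of_le h, Finset.Ioc_eq_empty_of_le (h.trans i.le_succ)]
  have hu (i : ℕ) :
      c (i + 1) • x (i + 1) = A i (c i • x i) + (c (i + 1) - c i) • x (i + 1) := by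
    rw [map_smul, ← hx, sub_smul]
    abel
  have hw (i : ℕ) : ‖(c (i + 1) - c i) • x (i + 1)‖ ≤ 1 := by
    rw [norm_smul, Real.norm_eq_abs]
    exact (mul_le_mul_of_nonneg_right (hc i) (norm_nonneg _)).trans inv_mul_le_one
  have hbdd : ∃ b, ∀ᶠ i in atTop, ‖c i • x i‖ ≤ b :=
    ⟨0, (eventually_ge_atTop j).mono fun i hi => by simp [c, Finset.Ioc_eq_empty_of_le hi]⟩
  obtain ⟨s, hs, hus⟩ := exists_mem_stableSubspace_forall_norm_sub_le A hL hu hw hbdd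
  -- `c r • x r` lies in the kernel of the transported projection, `Phi A r 0 s` in its range
  set y := c r • x r - Phi A r 0 s
  have hy : c r • x r = y - transportedProj A P r y := by
    simp [y, x, transportedProj_apply_Phi, hη, P, Submodule.starProjection_eq_self_iff.2 hs]
  calc (∑ t ∈ Finset.Ioc r j, ‖x t‖⁻¹) * ‖x r‖ = ‖c r • x r‖ := by
        rw [norm_smul, hcr, Real.norm_of_nonneg (Finset.sum_nonneg fun t _ => by positivity)]
    _ ≤ ‖y‖ + M * ‖y‖ := hy ▸ norm_sub_le_of_le le_rfl (hM r y)
    _ ≤ (1 + M) * L := by rw [← one_add_mul]; gcongr; simpa using hus r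

theorem norm_Phi_le_of_mem_stableSubspace {N L K C : ℝ}
    (hA : ∀ k, ‖(A k : E →L[ℝ] E)‖ ≤ N)
    (hL : SolvableWithBound (fun k : ℕ => (A k : E →L[ℝ] E)) L)
    (hK : ∀ ξ ∈ stableSubspace A, ∀ k : ℕ, ‖Phi A k 0 ξ‖ ≤ K * ‖ξ‖) (hK0 : 0 ≤ K)
    (hC : (1 + K) * L * N ≤ C) {ξ : E} (hξ : ξ ∈ stableSubspace A) {n j : ℕ} (hnj : n ≤ j) :
    ‖Phi A j 0 ξ‖ ≤ (C + 1) * (C / (C + 1)) ^ (j - n) * ‖Phi A n 0 ξ‖ := by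
  rcases eq_or_ne ξ 0 with rfl | hξ0
  · simp
  exact le_mul_pow_of_sum_Ico_inv_mul_le (fun t => norm_pos_iff.2 (Phi_apply_ne_zero A hξ0))
    (fun n j _ => (sum_Ico_inv_norm_Phi_mul_le A hA hL hK hK0 hξ n j).trans hC) hnj

theorem norm_Phi_le_of_starProjection_eq_zero {L M C : ℝ}
    (hL : SolvableWithBound (fun k : ℕ => (A k : E →L[ℝ] E)) L)
    (hM : ∀ (l : ℕ) (v : E),
      ‖transportedProj A (stableSubspace A).starProjection l v‖ ≤ M * ‖v‖) (hM0 : 0 ≤ M)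
    (hC : (1 + M) * L ≤ C) {η : E} (hη : (stableSubspace A).starProjection η = 0) {r j : ℕ}
    (hrj : r ≤ j) :
    ‖Phi A r 0 η‖ ≤ (C + 1) * (C / (C + 1)) ^ (j - r) * ‖Phi A j 0 η‖ := by
  rcases eq_or_ne η 0 with rfl | hη0
  · simp
  exact le_mul_pow_of_sum_Ioc_inv_mul_le (fun t => norm_pos_iff.2 (Phi_apply_ne_zero A hη0))
    (fun r j _ => (sum_Ioc_inv_norm_Phi_mul_le A hL hM hM0 hη r j).trans hC) hrj

theorem hyperbolicOnPlusRay_of_transportedProj {P : E →L[ℝ] E} (hP : IsIdempotentElem P)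
    {D θ M : ℝ} (hD : 0 < D) (hθ : θ ∈ Set.Ioo (0 : ℝ) 1) (hM : 0 ≤ M)
    (hbound : ∀ (l : ℕ) (v : E), ‖transportedProj A P l v‖ ≤ M * ‖v‖)
    (hdecay : ∀ ξ, P ξ = ξ → ∀ n j : ℕ, n ≤ j →
      ‖Phi A j 0 ξ‖ ≤ D * θ ^ (j - n) * ‖Phi A n 0 ξ‖)
    (hgrowth : ∀ η, P η = 0 → ∀ r j : ℕ, r ≤ j →
      ‖Phi A r 0 η‖ ≤ D * θ ^ (j - r) * ‖Phi A j 0 η‖) :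
    HyperbolicOnPlusRay A := by
  have hPP (x : E) : P (P x) = P x := congrArg (· x) hP.eq
  have hDθ (p : ℕ) : 0 ≤ D * θ ^ p := by have := hθ.1; positivity
  refine ⟨D * (1 + M), θ, transportedProj A P, by positivity, hθ, fun k _ => ?_,
    fun k l _ _ => ?_, fun k l hl hlk v => ?_, fun k l hk hkl v => ?_⟩
  · ext1 v
    simp [transportedProj_apply, Phi_apply_Phi, hPP]
  · ext1 v
    simp [transportedProj_apply, Phi_apply_Phi]
  · lift l to ℕ using hl
    lift k to ℕ using (by omega)
    rw [transportedProj_apply, Phi_apply_Phi, show ((k : ℤ) - l).toNat = k - l by omega]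
    calc _ ≤ D * θ ^ (k - l) * ‖Phi A l 0 (P (Phi A 0 l v))‖ :=
          hdecay _ (hPP _) l k (by omega)
      _ ≤ D * θ ^ (k - l) * (M * ‖v‖) := by gcongr; exacts [hDθ _, hbound l v]
      _ ≤ D * (1 + M) * θ ^ (k - l) * ‖v‖ := by nlinarith [hDθ (k - l), norm_nonneg v]
  · lift k to ℕ using hk
    lift l to ℕ using (by omega)
    set η := Phi A 0 l v
    have hv : (1 - transportedProj A P l) v = Phi A l 0 (η - P η) := by
      simp [η, transportedProj_apply, Phi_apply_Phi]
    rw [hv, Phi_apply_Phi, show ((l : ℤ) - k).toNat = l - k by omega]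
    calc _ ≤ D * θ ^ (l - k) * ‖Phi A l 0 (η - P η)‖ :=
          hgrowth _ (by rw [map_sub, hPP, sub_self]) k l (by omega)
      _ ≤ D * θ ^ (l - k) * ((1 + M) * ‖v‖) := by
          gcongr
          · exact hDθ _
          rw [← hv, sub_apply, one_apply_eq_self, add_mul, one_mul]
          exact norm_sub_le_of_le le_rfl (hbound l v)
      _ = D * (1 + M) * θ ^ (l - k) * ‖v‖ := by ring

end Flow

theorem hyperbolicOnPlusRay_of_bounded_solvability_general
    {m : ℕ} (A : ℤ → (EuclideanSpace ℝ (Fin m) ≃L[ℝ] EuclideanSpace ℝ (Fin m)))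
    (N : ℝ)
    (hA : ∀ k : ℤ, ‖(A k : EuclideanSpace ℝ (Fin m) →L[ℝ] EuclideanSpace ℝ (Fin m))‖ ≤ N)
    (hsolv : ∀ w : ℤ → EuclideanSpace ℝ (Fin m), (∃ C : ℝ, ∀ k : ℤ, ‖w k‖ ≤ C) →
      ∃ v : ℤ → EuclideanSpace ℝ (Fin m), (∃ C : ℝ, ∀ k : ℤ, ‖v k‖ ≤ C) ∧
        ∀ k : ℤ, v (k + 1) = A k (v k) + w k) :
    HyperbolicOnPlusRay A := by
  obtain ⟨L, hL1, hL⟩ := exists_solvableWithBound (fun k : ℕ => hA k) fun w ⟨c, hc⟩ => by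
    obtain ⟨v, ⟨c', hc'⟩, hv⟩ := hsolv (fun k => w k.toNat) ⟨c, fun k => hc _⟩
    exact ⟨fun k => v k, ⟨c', fun k => hc' k⟩, fun k => by simpa using hv k⟩
  obtain ⟨K, hK0, hK⟩ := exists_norm_Phi_le_of_mem_stableSubspace A
  have hN : 0 ≤ N := (norm_nonneg _).trans (hA 0)
  set M := (1 + K) * L
  set C := (1 + K) * L * N + (1 + M) * L
  have hM0 : 0 ≤ M := by positivity
  have hP := norm_transportedProj_starProjection_le A hL hL1 hK hK0
  exact hyperbolicOnPlusRay_of_transportedProj A (Submodule.isIdempotentElem_starProjection _)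
    (by positivity) ⟨by positivity, (div_lt_one (by positivity)).2 (by linarith)⟩ hM0 hP
    (fun ξ hξ n j => norm_Phi_le_of_mem_stableSubspace A hA hL hK hK0 (C := C)
      (le_add_of_nonneg_right (by positivity))
      (Submodule.starProjection_eq_self_iff.1 hξ))
    (fun η hη r j => norm_Phi_le_of_starProjection_eq_zero A hL hP hM0 (C := C)
      (le_add_of_nonneg_left (by positivity)) hη)

/-- If for every bounded sequence `{w_k}` the difference equation `v_{k+1} = A_k v_k + w_k`
has a bounded solution `{v_k}`, then the sequence `{A_k}` is hyperbolic on the ray `[0,+∞)`. -/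
theorem hyperbolicOnPlusRay_of_bounded_solvability
    {m : ℕ} (A : ℤ → (EuclideanSpace ℝ (Fin m) ≃L[ℝ] EuclideanSpace ℝ (Fin m)))
    (N : ℝ) (hN : 0 < N)
    (hA : ∀ k : ℤ, ‖(A k : EuclideanSpace ℝ (Fin m) →L[ℝ] EuclideanSpace ℝ (Fin m))‖ ≤ N)
    (hAinv : ∀ k : ℤ,
      ‖((A k).symm : EuclideanSpace ℝ (Fin m) →L[ℝ] EuclideanSpace ℝ (Fin m))‖ ≤ N)
    (hsolv : ∀ w : ℤ → EuclideanSpace ℝ (Fin m), (∃ C : ℝ, ∀ k : ℤ, ‖w k‖ ≤ C) →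
      ∃ v : ℤ → EuclideanSpace ℝ (Fin m), (∃ C : ℝ, ∀ k : ℤ, ‖v k‖ ≤ C) ∧
        ∀ k : ℤ, v (k + 1) = A k (v k) + w k) :
    HyperbolicOnPlusRay A :=
  hyperbolicOnPlusRay_of_bounded_solvability_general A N hA hsolv
end

section
/- Let {A_k : ℝ^m → ℝ^m, k ∈ ℤ} be a sequence of linear isomorphisms for which there is a constant N > 0 with ‖A_k‖ ≤ N and ‖A_k⁻¹‖ ≤ N for all k. Assume that the sequence {A_k} is hyperbolic on the ray [0, +∞), hyperbolic on the ray (−∞, 0], and that B⁺(𝒜) + B⁻(𝒜) = ℝ^m. Then for every bounded sequence {w_k ∈ ℝ^m, k ∈ ℤ} there exists a bounded sequence {v_k ∈ ℝ^m, k ∈ ℤ} such that v_{k+1} = A_k v_k + w_k for all k ∈ ℤ. -/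
open Filter Topology

/-!
On each ray the dichotomy gives a Green kernel `G(k,l)`, equal to `Φ(k,l) P_l` for `l ≤ k` and
to `-Φ(k,l) (1 - P_l)` for `l > k`, which decays like `λ^|k-l|`; hence the Lyapunov–Perron sum
`u_k = ∑_l G(k,l) w_{l-1}` converges to a solution of `v_{k+1} = A_k v_k + w_k` that is bounded
along the ray. The recurrence comes from `G(k+1,l) = A_k G(k,l)` for `l ≠ k+1` and
`G(k+1,k+1) - A_k G(k,k+1) = P_{k+1} + (1 - P_{k+1}) = Id`. The two half-line solutions
`u⁺, u⁻` need not agree at `0`; splitting `u⁻_0 - u⁺_0 = x + y` with `x ∈ B⁺`, `y ∈ B⁻` and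
adding the homogeneous solutions `Φ(k,0) x` on `[0, ∞)` and `-Φ(k,0) y` on `(-∞, 0]`, both
bounded there, makes them match.
-/

section Recurrence

variable {E F : Type*} [SeminormedAddCommGroup E] [FunLike F E E]

def IsBoundedSolutionOn (A : ℤ → F) (w : ℤ → E) (S : Set ℤ) (v : ℤ → E) : Prop :=
  (∃ C, ∀ k ∈ S, ‖v k‖ ≤ C) ∧ ∀ k ∈ S, k + 1 ∈ S → v (k + 1) = A k (v k) + w k

variable {A : ℤ → F} {w : ℤ → E}

theorem IsBoundedSolutionOn.glue {u v : ℤ → E} (hu : IsBoundedSolutionOn A w (Set.Ici 0) u)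
    (hv : IsBoundedSolutionOn A w (Set.Iic 0) v) (h0 : u 0 = v 0) :
    IsBoundedSolutionOn A w Set.univ (fun k => if 0 ≤ k then u k else v k) := by
  obtain ⟨⟨C, hC⟩, hu⟩ := hu
  obtain ⟨⟨D, hD⟩, hv⟩ := hv
  have eq_u : ∀ k, 0 ≤ k → (if 0 ≤ k then u k else v k) = u k := fun k hk => if_pos hk
  have eq_v : ∀ k, k ≤ 0 → (if 0 ≤ k then u k else v k) = v k := by
    intro k hk
    rcases hk.lt_or_eq with hk | rfl
    · exact if_neg hk.not_ge
    · exact (if_pos le_rfl).trans h0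
  refine ⟨⟨max C D, fun k _ => ?_⟩, fun k _ _ => ?_⟩ <;> dsimp only
  · rcases le_total 0 k with hk | hk
    · rw [eq_u k hk]
      exact (hC k hk).trans (le_max_left _ _)
    · rw [eq_v k hk]
      exact (hD k hk).trans (le_max_right _ _)
  · rcases lt_or_ge k 0 with hk | hk
    · rw [eq_v k hk.le, eq_v (k + 1) (by omega)]
      exact hv k hk.le (Set.mem_Iic.2 (by omega))
    · rw [eq_u k hk, eq_u (k + 1) (by omega)]
      exact hu k hk (Set.mem_Ici.2 (by omega))

variable [AddMonoidHomClass F E E] {S : Set ℤ}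

theorem IsBoundedSolutionOn.add_homogeneous {v h : ℤ → E} (hv : IsBoundedSolutionOn A w S v)
    (hh : IsBoundedSolutionOn A 0 S h) : IsBoundedSolutionOn A w S (v + h) := by
  obtain ⟨⟨C, hC⟩, hv⟩ := hv
  obtain ⟨⟨D, hD⟩, hh⟩ := hh
  refine ⟨⟨C + D, fun k hk => (norm_add_le _ _).trans (add_le_add (hC k hk) (hD k hk))⟩,
    fun k hk hk' => ?_⟩
  simp only [Pi.add_apply, hv k hk hk', hh k hk hk', map_add, Pi.zero_apply, add_zero]
  abel

theorem IsBoundedSolutionOn.sub_homogeneous {v h : ℤ → E} (hv : IsBoundedSolutionOn A w S v)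
    (hh : IsBoundedSolutionOn A 0 S h) : IsBoundedSolutionOn A w S (v - h) := by
  obtain ⟨⟨C, hC⟩, hv⟩ := hv
  obtain ⟨⟨D, hD⟩, hh⟩ := hh
  refine ⟨⟨C + D, fun k hk => (norm_sub_le _ _).trans (add_le_add (hC k hk) (hD k hk))⟩,
    fun k hk hk' => ?_⟩
  simp only [Pi.sub_apply, hv k hk hk', hh k hk hk', map_sub, Pi.zero_apply, add_zero]
  abel

end Recurrence

theorem summable_and_norm_tsum_le_of_norm_le_geometric {E : Type*} [NormedAddCommGroup E]
    [CompleteSpace E] {f : ℤ → E} {B lam : ℝ} (h0 : 0 ≤ lam) (h1 : lam < 1) (k : ℤ)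
    (hf : ∀ l, ‖f l‖ ≤ B * lam ^ (k - l).natAbs) :
    Summable f ∧ ‖∑' l, f l‖ ≤ B * ∑' n : ℤ, lam ^ n.natAbs := by
  have hgeom : Summable fun n : ℤ => lam ^ n.natAbs :=
    .of_nat_of_neg (by simpa using summable_geometric_of_lt_one h0 h1)
      (by simpa using summable_geometric_of_lt_one h0 h1)
  have hbound : Summable fun l => B * lam ^ (k - l).natAbs :=
    ((Equiv.subLeft k).summable_iff.2 hgeom).mul_left B
  refine ⟨.of_norm_bounded hbound hf, ?_⟩
  calc ‖∑' l, f l‖ ≤ ∑' l, B * lam ^ (k - l).natAbs := tsum_of_norm_bounded hbound.hasSum hf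
    _ = B * ∑' n : ℤ, lam ^ n.natAbs := by
      rw [tsum_mul_left]
      congr 1
      exact (Equiv.subLeft k).tsum_eq fun n => lam ^ n.natAbs

section Transition

variable {m : ℕ} (A : ℤ → (EuclideanSpace ℝ (Fin m) ≃L[ℝ] EuclideanSpace ℝ (Fin m)))

local notation "𝔼" => EuclideanSpace ℝ (Fin m)

theorem phiNeg_succ_apply (k : ℤ) (n : ℕ) (x : 𝔼) :
    PhiNeg A k (n + 1) x = (A k).symm (PhiNeg A (k + 1) n x) := by
  induction n generalizing x with
  | zero => simp [PhiNeg]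
  | succ n ih =>
    rw [PhiNeg, ContinuousLinearMap.comp_apply, ih, PhiNeg, ContinuousLinearMap.comp_apply]
    rw [show k + ((n + 1 : ℕ) : ℤ) = k + 1 + n by push_cast; ring]

theorem phi_self_apply (k : ℤ) (x : 𝔼) : Phi A k k x = x := by
  simp [Phi, PhiPos]

theorem phi_succ_apply (k l : ℤ) (x : 𝔼) : Phi A (k + 1) l x = A k (Phi A k l x) := by
  rcases le_or_gt l k with h | h
  · obtain ⟨n, rfl⟩ : ∃ n : ℕ, k = l + n := ⟨(k - l).toNat, by omega⟩
    have hn : (l + n + 1 - l).toNat = n + 1 := by omega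
    simp [Phi, h, show l ≤ l + n + 1 by omega, hn, PhiPos]
  · obtain ⟨n, rfl⟩ : ∃ n : ℕ, l = k + 1 + n := ⟨(l - (k + 1)).toNat, by omega⟩
    rcases n.eq_zero_or_pos with rfl | hn
    · simp [Phi, PhiNeg, PhiPos]
    · have htoNat : (k + 1 + n - k).toNat = n + 1 := by omega
      simp [Phi, show ¬ k + 1 + (n : ℤ) ≤ k + 1 by omega, show ¬ k + 1 + (n : ℤ) ≤ k by omega,
        htoNat, phiNeg_succ_apply]

noncomputable def greenKernel (R : ℤ → 𝔼 →L[ℝ] 𝔼) (k l : ℤ) : 𝔼 →L[ℝ] 𝔼 :=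
  if l ≤ k then (Phi A k l).comp (R l) else -(Phi A k l).comp (1 - R l)

theorem greenKernel_succ_apply (R : ℤ → 𝔼 →L[ℝ] 𝔼) (k l : ℤ) (x : 𝔼) :
    greenKernel A R (k + 1) l x = A k (greenKernel A R k l x) + if l = k + 1 then x else 0 := by
  rcases lt_trichotomy l (k + 1) with h | rfl | h
  · simp [greenKernel, show l ≤ k by omega, h.le, h.ne, phi_succ_apply]
  · simp [greenKernel, ← phi_succ_apply, phi_self_apply]
  · simp [greenKernel, show ¬ l ≤ k by omega, show ¬ l ≤ k + 1 by omega, h.ne', phi_succ_apply]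

theorem norm_greenKernel_apply_le {R : ℤ → 𝔼 →L[ℝ] 𝔼} {C lam : ℝ} {k l : ℤ} {x : 𝔼}
    (hs : l ≤ k → ‖Phi A k l (R l x)‖ ≤ C * lam ^ (k - l).toNat * ‖x‖)
    (hu : k ≤ l → ‖Phi A k l ((1 - R l) x)‖ ≤ C * lam ^ (l - k).toNat * ‖x‖) :
    ‖greenKernel A R k l x‖ ≤ C * lam ^ (k - l).natAbs * ‖x‖ := by
  by_cases h : l ≤ k
  · simpa [greenKernel, h, show (k - l).toNat = (k - l).natAbs by omega] using hs h
  · simpa [greenKernel, h, show (l - k).toNat = (k - l).natAbs by omega, norm_sub_rev]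
      using hu (by omega)

def GreenKernelDecaysOn (R : ℤ → 𝔼 →L[ℝ] 𝔼) (S : Set ℤ) (C lam : ℝ) : Prop :=
  ∀ k ∈ S, ∀ l ∈ S, ∀ x, ‖greenKernel A R k l x‖ ≤ C * lam ^ (k - l).natAbs * ‖x‖

variable {A}

theorem HyperbolicOnPlusRay.exists_greenKernelDecaysOn (h : HyperbolicOnPlusRay A) :
    ∃ (R : ℤ → 𝔼 →L[ℝ] 𝔼) (C lam : ℝ),
      0 ≤ C ∧ lam ∈ Set.Ico 0 1 ∧ GreenKernelDecaysOn A R (Set.Ici 0) C lam := by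
  obtain ⟨C, lam, P, hC, hlam, -, -, hs, hu⟩ := h
  exact ⟨P, C, lam, hC.le, Set.Ioo_subset_Ico_self hlam, fun k hk l hl x =>
    norm_greenKernel_apply_le A (fun hlk => hs k l hl hlk x) (fun hkl => hu k l hk hkl x)⟩

theorem HyperbolicOnMinusRay.exists_greenKernelDecaysOn (h : HyperbolicOnMinusRay A) :
    ∃ (R : ℤ → 𝔼 →L[ℝ] 𝔼) (C lam : ℝ),
      0 ≤ C ∧ lam ∈ Set.Ico 0 1 ∧ GreenKernelDecaysOn A R (Set.Iic 0) C lam := by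
  obtain ⟨C, lam, Q, hC, hlam, -, -, hs, hu⟩ := h
  exact ⟨Q, C, lam, hC.le, Set.Ioo_subset_Ico_self hlam, fun k hk l hl x =>
    norm_greenKernel_apply_le A (fun hlk => hs k l hlk hk x) (fun hkl => hu k l hkl hl x)⟩

variable (A) in
noncomputable def greenSolution (R : ℤ → 𝔼 →L[ℝ] 𝔼) (S : Set ℤ) (w : ℤ → 𝔼) (k : ℤ) : 𝔼 :=
  ∑' l, S.indicator (fun l => greenKernel A R k l (w (l - 1))) l

theorem GreenKernelDecaysOn.isBoundedSolutionOn_greenSolution {R : ℤ → 𝔼 →L[ℝ] 𝔼} {S : Set ℤ}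
    {C lam W : ℝ} {w : ℤ → 𝔼} (hG : GreenKernelDecaysOn A R S C lam) (hC : 0 ≤ C)
    (hlam : lam ∈ Set.Ico 0 1) (hw : ∀ k, ‖w k‖ ≤ W) :
    IsBoundedSolutionOn A w S (greenSolution A R S w) := by
  have hW : 0 ≤ W := (norm_nonneg _).trans (hw 0)
  have hlam₀ : 0 ≤ lam := hlam.1
  have hterm : ∀ k ∈ S, ∀ l, ‖S.indicator (fun l => greenKernel A R k l (w (l - 1))) l‖
      ≤ C * W * lam ^ (k - l).natAbs := by
    intro k hk l
    by_cases hl : l ∈ S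
    · rw [Set.indicator_of_mem hl]
      calc _ ≤ C * lam ^ (k - l).natAbs * ‖w (l - 1)‖ := hG k hk l hl _
        _ ≤ C * lam ^ (k - l).natAbs * W := by gcongr; exact hw _
        _ = C * W * lam ^ (k - l).natAbs := by ring
    · rw [Set.indicator_of_notMem hl, norm_zero]
      positivity
  have hsum := fun k hk =>
    summable_and_norm_tsum_le_of_norm_le_geometric hlam.1 hlam.2 k (hterm k hk)
  refine ⟨⟨C * W * ∑' n : ℤ, lam ^ n.natAbs, fun k hk => (hsum k hk).2⟩, fun k hk hk₁ => ?_⟩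
  have hstep : ∀ l, S.indicator (fun l => greenKernel A R (k + 1) l (w (l - 1))) l
      = A k (S.indicator (fun l => greenKernel A R k l (w (l - 1))) l)
        + if l = k + 1 then w k else 0 := by
    intro l
    by_cases hl : l ∈ S
    · rw [Set.indicator_of_mem hl, Set.indicator_of_mem hl, greenKernel_succ_apply]
      split_ifs with h
      · subst h; simp
      · rfl
    · have : l ≠ k + 1 := by rintro rfl; exact hl hk₁
      simp [Set.indicator_of_notMem hl, this]
  have hs := (hsum k hk).1
  calc greenSolution A R S w (k + 1)
      = ∑' l, (A k (S.indicator (fun l => greenKernel A R k l (w (l - 1))) l)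
          + if l = k + 1 then w k else 0) := tsum_congr hstep
    _ = A k (greenSolution A R S w k) + w k := by
      rw [Summable.tsum_add ((A k).summable.2 hs) (hasSum_ite_eq _ _).summable, tsum_ite_eq,
        greenSolution, ContinuousLinearEquiv.map_tsum]

theorem isBoundedSolutionOn_phi_of_mem_Bplus {x : 𝔼} (hx : x ∈ Bplus A) :
    IsBoundedSolutionOn A 0 (Set.Ici 0) (fun k => Phi A k 0 x) := by
  obtain ⟨C, hC⟩ := (hx.comp tendsto_natCast_atTop_atTop).bddAbove_range
  refine ⟨⟨C, fun k hk => ?_⟩, fun k _ _ => by simp [phi_succ_apply]⟩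
  lift k to ℕ using hk
  exact hC ⟨k, rfl⟩

theorem isBoundedSolutionOn_phi_of_mem_Bminus {x : 𝔼} (hx : x ∈ Bminus A) :
    IsBoundedSolutionOn A 0 (Set.Iic 0) (fun k => Phi A k 0 x) := by
  obtain ⟨C, hC⟩ :=
    (hx.comp (tendsto_neg_atTop_atBot.comp tendsto_natCast_atTop_atTop)).bddAbove_range
  refine ⟨⟨C, fun k hk => ?_⟩, fun k _ _ => by simp [phi_succ_apply]⟩
  obtain ⟨n, rfl⟩ : ∃ n : ℕ, k = -n := ⟨(-k).toNat, by simp at hk; omega⟩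
  exact hC ⟨n, rfl⟩

end Transition

theorem bounded_solvability_of_hyperbolic_and_transverse_general
    {m : ℕ} (A : ℤ → (EuclideanSpace ℝ (Fin m) ≃L[ℝ] EuclideanSpace ℝ (Fin m)))
    (hplus : HyperbolicOnPlusRay A) (hminus : HyperbolicOnMinusRay A)
    (htrans : ∀ u : EuclideanSpace ℝ (Fin m), ∃ x ∈ Bplus A, ∃ y ∈ Bminus A, u = x + y) :
    ∀ w : ℤ → EuclideanSpace ℝ (Fin m), (∃ C : ℝ, ∀ k : ℤ, ‖w k‖ ≤ C) →
      ∃ v : ℤ → EuclideanSpace ℝ (Fin m), (∃ C : ℝ, ∀ k : ℤ, ‖v k‖ ≤ C) ∧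
        ∀ k : ℤ, v (k + 1) = A k (v k) + w k := by
  rintro w ⟨W, hw⟩
  obtain ⟨P, C₁, lam₁, hC₁, hlam₁, hP⟩ := hplus.exists_greenKernelDecaysOn
  obtain ⟨Q, C₂, lam₂, hC₂, hlam₂, hQ⟩ := hminus.exists_greenKernelDecaysOn
  set u₁ := greenSolution A P (Set.Ici 0) w
  set u₂ := greenSolution A Q (Set.Iic 0) w
  obtain ⟨x, hx, y, hy, hxy⟩ := htrans (u₂ 0 - u₁ 0)
  have hv₁ := (hP.isBoundedSolutionOn_greenSolution hC₁ hlam₁ hw).add_homogeneous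
    (isBoundedSolutionOn_phi_of_mem_Bplus hx)
  have hv₂ := (hQ.isBoundedSolutionOn_greenSolution hC₂ hlam₂ hw).sub_homogeneous
    (isBoundedSolutionOn_phi_of_mem_Bminus hy)
  have hmatch : (u₁ + fun k => Phi A k 0 x) 0 = (u₂ - fun k => Phi A k 0 y) 0 := by
    simp only [Pi.add_apply, Pi.sub_apply, phi_self_apply]
    rw [eq_sub_iff_add_eq, add_assoc, ← hxy]
    abel
  obtain ⟨⟨C, hC⟩, hrec⟩ := hv₁.glue hv₂ hmatch
  exact ⟨_, ⟨C, fun k => hC k trivial⟩, fun k => hrec k trivial trivial⟩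

/-- If `{A_k}` is hyperbolic on both rays `[0,+∞)` and `(-∞,0]` and
`B⁺(𝒜) + B⁻(𝒜) = ℝ^m`, then for every bounded sequence `{w_k}` the equation
`v_{k+1} = A_k v_k + w_k` has a bounded solution `{v_k}`. -/
theorem bounded_solvability_of_hyperbolic_and_transverse
    {m : ℕ} (A : ℤ → (EuclideanSpace ℝ (Fin m) ≃L[ℝ] EuclideanSpace ℝ (Fin m)))
    (N : ℝ) (hN : 0 < N)
    (hA : ∀ k : ℤ, ‖(A k : EuclideanSpace ℝ (Fin m) →L[ℝ] EuclideanSpace ℝ (Fin m))‖ ≤ N)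
    (hAinv : ∀ k : ℤ,
      ‖((A k).symm : EuclideanSpace ℝ (Fin m) →L[ℝ] EuclideanSpace ℝ (Fin m))‖ ≤ N)
    (hplus : HyperbolicOnPlusRay A) (hminus : HyperbolicOnMinusRay A)
    (htrans : ∀ u : EuclideanSpace ℝ (Fin m), ∃ x ∈ Bplus A, ∃ y ∈ Bminus A, u = x + y) :
    ∀ w : ℤ → EuclideanSpace ℝ (Fin m), (∃ C : ℝ, ∀ k : ℤ, ‖w k‖ ≤ C) →
      ∃ v : ℤ → EuclideanSpace ℝ (Fin m), (∃ C : ℝ, ∀ k : ℤ, ‖v k‖ ≤ C) ∧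
        ∀ k : ℤ, v (k + 1) = A k (v k) + w k :=
  bounded_solvability_of_hyperbolic_and_transverse_general A hplus hminus htrans
end
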